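/- arXiv:2112.05836 — 2 statements merged into one kernel-verified Lean document; each statement's English description precedes it below -/
import Mathlib

section
/- Let k ≥ 1 and let S_1, …, S_k be strings over an alphabet Σ, each of length M, and let γ denote the empty string. Then the median edit distance of the (2k−1)-tuple consisting of S_1, …, S_k together with k−1 copies of γ satisfies δ_E(S_1, …, S_k, γ, …, γ) = M·k − LCS(S_1, …, S_k). -/
/-!
For a target string `T`, the cost `∑ᵢ δ_E(Sᵢ, T) + (k - 1)|T|` is at most `Mk - LCS` when `T`
is a longest common subsequence (delete the other letters of each `Sᵢ`). Conversely, an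
optimal alignment of `Sᵢ` with `T` matches a common subsequence `Wᵢ` of both, with
`δ_E(Sᵢ, T) ≥ M - |Wᵢ|`. All `Wᵢ` sit inside `T`, and the letters of `T` that occur in every
`Wᵢ` form a common subsequence `V` of all `Sᵢ`; each other letter of `T` is missed by some
`Wᵢ`, so `∑ᵢ |Wᵢ| ≤ (k - 1)|T| + |V|`, which gives the lower bound `Mk - |V| ≥ Mk - LCS`.
-/

/-- Costs of the edit operations (removed from Mathlib; restored with its old meaning). -/
structure Levenshtein.Cost (α β δ : Type*) where
  delete : α → δ
  insert : β → δ
  substitute : α → β → δ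

/-- The default cost structure: each insertion, deletion or substitution of unequal letters costs 1. -/
def Levenshtein.defaultCost {α : Type*} [DecidableEq α] : Levenshtein.Cost α α ℕ where
  delete _ := 1
  insert _ := 1
  substitute a b := if a = b then 0 else 1

/-- The Levenshtein distance with cost structure `C` (old Mathlib `levenshtein`, by its
characterizing recursion). -/
def levenshtein {α β δ : Type*} [AddZeroClass δ] [Min δ] (C : Levenshtein.Cost α β δ) :
    List α → List β → δ
  | [], ys => (ys.map C.insert).sum
  | x :: xs, [] => ((x :: xs).map C.delete).sum
  | x :: xs, y :: ys =>
    min (C.delete x + levenshtein C xs (y :: ys))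
      (min (C.insert y + levenshtein C (x :: xs) ys) (C.substitute x y + levenshtein C xs ys))

/-- The Levenshtein edit distance between two strings. -/
def editDist {α : Type*} [DecidableEq α] (s t : List α) : ℕ :=
  levenshtein Levenshtein.defaultCost s t

/-- The median edit distance of a family of strings:
the minimum over target strings `T` of the sum of edit distances to `T`. -/
noncomputable def medianED {α : Type*} [DecidableEq α] (L : List (List α)) : ℕ :=
  sInf { d : ℕ | ∃ T : List α, d = (L.map fun s => editDist s T).sum }

/-- The length of a longest common subsequence of a family of strings. -/
noncomputable def lcsLen {α : Type*} (L : List (List α)) : ℕ :=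
  sSup { m : ℕ | ∃ T : List α, T.length = m ∧ ∀ s ∈ L, T.Sublist s }

section EditDistance

variable {α : Type*} [DecidableEq α]

theorem editDist_nil_left (t : List α) : editDist [] t = t.length := by
  simp [editDist, levenshtein, Levenshtein.defaultCost]

theorem editDist_nil_right (s : List α) : editDist s [] = s.length := by
  cases s <;> simp [editDist, levenshtein, Levenshtein.defaultCost, add_comm]

theorem editDist_cons_cons (x y : α) (xs ys : List α) :
    editDist (x :: xs) (y :: ys) =
      min (1 + editDist xs (y :: ys))
        (min (1 + editDist (x :: xs) ys) ((if x = y then 0 else 1) + editDist xs ys)) := by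
  rw [editDist, levenshtein]; rfl

theorem editDist_cons_left_le (x : α) (xs ys : List α) :
    editDist (x :: xs) ys ≤ 1 + editDist xs ys := by
  cases ys with
  | nil => simp [editDist_nil_right]
  | cons y ys => rw [editDist_cons_cons]; omega

theorem List.Sublist.editDist_add_length_le {w s : List α} (h : w.Sublist s) :
    editDist s w + w.length ≤ s.length := by
  induction h with
  | slnil => simp [editDist_nil_left]
  | @cons l₁ l₂ a _ ih =>
    have := editDist_cons_left_le a l₂ l₁
    simp only [List.length_cons]
    omega
  | @cons_cons l₁ l₂ a _ ih =>
    have := editDist_cons_cons a a l₂ l₁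
    rw [if_pos rfl] at this
    simp only [List.length_cons]
    omega

/-- An optimal alignment of `s` with `t` matches a common subsequence `w`; every letter of `s`
outside `w` costs at least one edit. -/
theorem exists_common_sublist_length_le_editDist_add (s t : List α) :
    ∃ w : List α, w.Sublist s ∧ w.Sublist t ∧ s.length ≤ editDist s t + w.length := by
  induction s generalizing t with
  | nil => exact ⟨[], by simp⟩
  | cons x xs ihx =>
    induction t with
    | nil => exact ⟨[], by simp [editDist_nil_right]⟩
    | cons y ys ihy =>
      obtain ⟨w₁, h₁s, h₁t, h₁⟩ := ihx (y :: ys)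
      obtain ⟨w₂, h₂s, h₂t, h₂⟩ := ihy
      obtain ⟨w₃, h₃s, h₃t, h₃⟩ := ihx ys
      have hd := editDist_cons_cons x y xs ys
      simp only [List.length_cons] at h₁ h₂ h₃ ⊢
      obtain hdel | hins | hsub :
          editDist (x :: xs) (y :: ys) = 1 + editDist xs (y :: ys) ∨
          editDist (x :: xs) (y :: ys) = 1 + editDist (x :: xs) ys ∨
          editDist (x :: xs) (y :: ys) = (if x = y then 0 else 1) + editDist xs ys := by
        omega
      · exact ⟨w₁, h₁s.cons x, h₁t, by omega⟩
      · exact ⟨w₂, h₂s, h₂t.cons y, by omega⟩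
      · by_cases hxy : x = y
        · subst hxy
          rw [if_pos rfl] at hsub
          refine ⟨x :: w₃, h₃s.cons_cons x, h₃t.cons_cons x, ?_⟩
          simp only [List.length_cons]
          omega
        · rw [if_neg hxy] at hsub
          exact ⟨w₃, h₃s.cons x, h₃t.cons y, by omega⟩

end EditDistance

/-- The letters of `t` kept by every `w i` form a common subsequence `v`; every other letter of
`t` is dropped by at least one `w i`. -/
theorem exists_common_sublist_sum_length_add_le {α ι : Type*} [Fintype ι] (t : List α)
    (w : ι → List α) (hw : ∀ i, (w i).Sublist t) :
    ∃ v : List α, (∀ i, v.Sublist (w i)) ∧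
      ∑ i, (w i).length + t.length ≤ Fintype.card ι * t.length + v.length := by
  classical
  induction t generalizing w with
  | nil =>
    have hnil : ∀ i, w i = [] := fun i => List.sublist_nil.mp (hw i)
    exact ⟨[], by simp [hnil]⟩
  | cons c t ih =>
    by_cases hdrop : ∃ j, (w j).Sublist t
    · obtain ⟨j, hj⟩ := hdrop
      set u : ι → List α := fun i => if (w i).Sublist t then w i else (w i).tail
      have hut : ∀ i, (u i).Sublist t := fun i => by
        by_cases h : (w i).Sublist t
        · simpa only [u, if_pos h] using h
        · simp only [u, if_neg h]
          exact (hw i).tail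
      have huw : ∀ i, (u i).Sublist (w i) := fun i => by
        by_cases h : (w i).Sublist t <;> simp [u, h, List.tail_sublist]
      have hlen : ∀ i ∈ Finset.univ, (w i).length ≤ (u i).length + 1 := fun i _ => by
        by_cases h : (w i).Sublist t
        · simp [u, h]
        · simp only [u, if_neg h, List.length_tail]; omega
      have hlenj : (w j).length < (u j).length + 1 := by simp [u, hj]
      obtain ⟨v, hv, hsum⟩ := ih u hut
      refine ⟨v, fun i => (hv i).trans (huw i), ?_⟩
      have hlt : ∑ i, (w i).length < ∑ i, ((u i).length + 1) :=
        Finset.sum_lt_sum hlen ⟨j, Finset.mem_univ j, hlenj⟩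
      rw [Finset.sum_add_distrib, Finset.sum_const, Finset.card_univ, smul_eq_mul,
        mul_one] at hlt
      simp only [List.length_cons, mul_add, mul_one]
      omega
    · simp only [not_exists] at hdrop
      have hkeep : ∀ i, ∃ r, w i = c :: r ∧ r.Sublist t := fun i =>
        (List.sublist_cons_iff.mp (hw i)).resolve_left (hdrop i)
      choose u hwu hut using hkeep
      obtain ⟨v, hv, hsum⟩ := ih u hut
      refine ⟨c :: v, fun i => hwu i ▸ (hv i).cons_cons c, ?_⟩
      simp only [hwu, List.length_cons, Finset.sum_add_distrib, Finset.sum_const,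
        Finset.card_univ, smul_eq_mul, mul_add, mul_one]
      omega

section LongestCommonSubsequence

variable {α : Type*} {L : List (List α)} {s : List α}

theorem bddAbove_lcsLen_set (hs : s ∈ L) :
    BddAbove { m : ℕ | ∃ T : List α, T.length = m ∧ ∀ s ∈ L, T.Sublist s } := by
  refine ⟨s.length, ?_⟩
  rintro _ ⟨T, rfl, hT⟩
  exact (hT s hs).length_le

theorem length_le_lcsLen (hs : s ∈ L) {t : List α} (ht : ∀ s ∈ L, t.Sublist s) :
    t.length ≤ lcsLen L :=
  le_csSup (bddAbove_lcsLen_set hs) ⟨t, rfl, ht⟩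

theorem exists_length_eq_lcsLen (hs : s ∈ L) :
    ∃ t : List α, t.length = lcsLen L ∧ ∀ s ∈ L, t.Sublist s :=
  Nat.sSup_mem (s := { m | ∃ T : List α, T.length = m ∧ ∀ s ∈ L, T.Sublist s })
    ⟨0, [], rfl, fun s _ => List.nil_sublist s⟩ (bddAbove_lcsLen_set hs)

end LongestCommonSubsequence

section MedianEditDistance

variable {α : Type*} [DecidableEq α]

theorem medianED_le (L : List (List α)) (T : List α) :
    medianED L ≤ (L.map fun s => editDist s T).sum :=
  Nat.sInf_le ⟨T, rfl⟩

theorem le_medianED {L : List (List α)} {d : ℕ}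
    (h : ∀ T : List α, d ≤ (L.map fun s => editDist s T).sum) : d ≤ medianED L :=
  le_csInf ⟨_, [], rfl⟩ <| by
    rintro _ ⟨T, rfl⟩
    exact h T

theorem sum_map_editDist_ofFn_append_replicate_nil {k : ℕ} (S : Fin k → List α) (n : ℕ)
    (T : List α) :
    ((List.ofFn S ++ List.replicate n []).map fun s => editDist s T).sum =
      ∑ i, editDist (S i) T + n * T.length := by
  rw [List.map_append, List.sum_append, List.map_ofFn, List.sum_ofFn, List.map_replicate,
    List.sum_replicate, smul_eq_mul, editDist_nil_left]
  rfl

variable {ι : Type*} [Fintype ι] (S : ι → List α)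

theorem sum_editDist_add_card_mul_length_le {w : List α} (hw : ∀ i, w.Sublist (S i)) :
    ∑ i, editDist (S i) w + Fintype.card ι * w.length ≤ ∑ i, (S i).length := by
  calc ∑ i, editDist (S i) w + Fintype.card ι * w.length
      = ∑ i, (editDist (S i) w + w.length) := by
        rw [Finset.sum_add_distrib, Finset.sum_const, Finset.card_univ, smul_eq_mul]
    _ ≤ ∑ i, (S i).length := Finset.sum_le_sum fun i _ => (hw i).editDist_add_length_le

theorem exists_common_sublist_sum_length_add_le_sum_editDist (T : List α) :
    ∃ v : List α, (∀ i, v.Sublist (S i)) ∧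
      ∑ i, (S i).length + T.length ≤
        ∑ i, editDist (S i) T + Fintype.card ι * T.length + v.length := by
  choose w hwS hwT hw using fun i => exists_common_sublist_length_le_editDist_add (S i) T
  obtain ⟨v, hvw, hv⟩ := exists_common_sublist_sum_length_add_le T w hwT
  have hS : ∑ i, (S i).length ≤ ∑ i, editDist (S i) T + ∑ i, (w i).length := by
    rw [← Finset.sum_add_distrib]
    exact Finset.sum_le_sum fun i _ => hw i
  exact ⟨v, fun i => (hvw i).trans (hwS i), by omega⟩

end MedianEditDistance

/-- For `k ≥ 1` strings `S₁, …, S_k`, each of length `M`, the median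
edit distance of the `(2k−1)`-tuple `S₁, …, S_k, γ, …, γ` (with `k−1` copies of the
empty string `γ`) equals `M·k − LCS(S₁, …, S_k)`. -/
theorem median_edit_distance_with_empty_strings
    {α : Type*} [DecidableEq α] (k M : ℕ) (hk : 1 ≤ k)
    (S : Fin k → List α) (hlen : ∀ i, (S i).length = M) :
    medianED (List.ofFn S ++ List.replicate (k - 1) ([] : List α)) =
      M * k - lcsLen (List.ofFn S) := by
  have hS₀ : S ⟨0, hk⟩ ∈ List.ofFn S := List.mem_ofFn.mpr ⟨_, rfl⟩
  have hsum : ∑ i, (S i).length = M * k := by simp [hlen, mul_comm]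
  have hpad (n : ℕ) : (k - 1) * n + n = k * n := by
    rw [← Nat.succ_mul, Nat.succ_eq_add_one, Nat.sub_add_cancel hk]
  have hcommon {t : List α} : (∀ s ∈ List.ofFn S, t.Sublist s) ↔ ∀ i, t.Sublist (S i) := by
    simp
  apply le_antisymm
  · obtain ⟨t, ht, hts⟩ := exists_length_eq_lcsLen hS₀
    have hup := sum_editDist_add_card_mul_length_le S (hcommon.mp hts)
    have hpad_t := hpad t.length
    rw [Fintype.card_fin, hsum] at hup
    refine (medianED_le _ t).trans ?_
    rw [sum_map_editDist_ofFn_append_replicate_nil]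
    omega
  · refine le_medianED fun T => ?_
    obtain ⟨v, hvS, hv⟩ := exists_common_sublist_sum_length_add_le_sum_editDist S T
    have hvL := length_le_lcsLen hS₀ (hcommon.mpr hvS)
    have hpad_T := hpad T.length
    rw [Fintype.card_fin, hsum] at hv
    rw [sum_map_editDist_ofFn_append_replicate_nil]
    omega
end

section
/- Let k ≥ 2 and let H : [1..2^k] → {0,1}^k be a bijection such that H(2^k) is the all-ones vector. Over the three-symbol alphabet {0, 1, %}, for i ∈ [1..k] and b ∈ {0,1} define the string h_{b,i} of length 2^k by: h_{b,i}[j] = 1 if H(j)(i) = b and j ≠ 2^k; h_{b,i}[j] = 0 if i < k and the previous condition fails; h_{b,i}[j] = % if i = k and the first condition fails. Then for all bits b_1, …, b_k ∈ {0,1}, the number of positions j ∈ [1..2^k] at which h_{b_1,1}[j] = h_{b_2,2}[j] = ⋯ = h_{b_k,k}[j] equals 0 if b_1 = b_2 = ⋯ = b_k = 1, and equals 1 otherwise. -/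
/-!
At a position `j ≠ 2^k` where `H j` agrees with `b` every selector string reads `1`. At any
other position the strings for `i < k` read `0` or `1` and the one for `i = k` reads `%` or `1`,
so they can only agree if all of them read `1`, which is impossible. The matching positions are
therefore the preimage of `b` under the bijection `H`, minus the position `2^k`; that preimage
is a single position, and it is `2^k` exactly when `b` is the all-ones vector.
-/

open Finset

theorem forall_ite_eq_ite_iff {ι α : Type*} {P : ι → Prop} [DecidablePred P] {a : α}
    {d : ι → α} (hd : ∀ i, d i ≠ a) {i₀ i₁ : ι} (hd₀₁ : d i₀ ≠ d i₁) :
    (∀ i i', (if P i then a else d i) = if P i' then a else d i') ↔ ∀ i, P i := by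
  refine ⟨fun hall => ?_, fun hP i i' => by simp only [hP, if_true]⟩
  by_cases hP₀ : P i₀
  · intro i
    by_contra hPi
    have := hall i₀ i
    rw [if_pos hP₀, if_neg hPi] at this
    exact hd i this.symm
  · exfalso
    have := hall i₀ i₁
    rw [if_neg hP₀] at this
    split_ifs at this with hP₁
    · exact hd i₀ this
    · exact hd₀₁ this

theorem Function.Bijective.card_filter_eq_and_ne {α β : Type*} [Fintype α] [DecidableEq α]
    [DecidableEq β] {H : α → β} (hH : Function.Bijective H) (last : α) (b : β) :
    #{j | H j = b ∧ j ≠ last} = if b = H last then 0 else 1 := by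
  obtain ⟨j₀, rfl⟩ := hH.2 b
  have hfilter : ({j | H j = H j₀ ∧ j ≠ last} : Finset α) = ({j₀} : Finset α).erase last := by
    ext j
    simp [hH.1.eq_iff, and_comm]
  rw [hfilter]
  by_cases h : j₀ = last
  · simp [h]
  · rw [if_neg (hH.1.ne h), Finset.erase_eq_of_notMem (by simpa [eq_comm] using h),
      Finset.card_singleton]

/-- The three-symbol alphabet `{0, 1, %}` is `Fin 3`, with `%` encoded as `2`; positions are
0-indexed, so the position `2^k` is the index `2^k − 1` and the condition `i < k` reads
`(i : ℕ) < k − 1`. -/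
theorem selector_string_match_count
    (k : ℕ) (hk : 2 ≤ k)
    (H : Fin (2 ^ k) → (Fin k → Bool)) (hH : Function.Bijective H)
    (hlast : H ⟨2 ^ k - 1, Nat.sub_lt (Nat.two_pow_pos k) one_pos⟩ = fun _ => true)
    (b : Fin k → Bool) :
    let lastIdx : Fin (2 ^ k) := ⟨2 ^ k - 1, Nat.sub_lt (Nat.two_pow_pos k) one_pos⟩
    let h : Bool → Fin k → Fin (2 ^ k) → Fin 3 := fun bb i j =>
      if H j i = bb ∧ j ≠ lastIdx then 1
      else if (i : ℕ) < k - 1 then 0 else 2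
    (Finset.univ.filter fun j : Fin (2 ^ k) =>
        ∀ i i' : Fin k, h (b i) i j = h (b i') i' j).card =
      if ∀ i, b i = true then 0 else 1 := by
  intro lastIdx h
  have hfallback : ∀ i : Fin k, (if (i : ℕ) < k - 1 then 0 else 2 : Fin 3) ≠ 1 := by
    intro i
    split_ifs <;> decide
  have hfallback₀₁ : (if ((⟨0, by omega⟩ : Fin k) : ℕ) < k - 1 then 0 else 2 : Fin 3) ≠
      if ((⟨k - 1, by omega⟩ : Fin k) : ℕ) < k - 1 then 0 else 2 := by
    rw [if_pos (by simp only; omega), if_neg (lt_irrefl _)]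
    decide
  have hmatch : ∀ j, (∀ i i' : Fin k, h (b i) i j = h (b i') i' j) ↔ H j = b ∧ j ≠ lastIdx := by
    intro j
    rw [forall_ite_eq_ite_iff hfallback hfallback₀₁, funext_iff]
    have : Nonempty (Fin k) := ⟨⟨0, by omega⟩⟩
    exact forall_and_right _ _
  rw [Finset.filter_congr fun j _ => hmatch j, hH.card_filter_eq_and_ne, hlast]
  simp only [funext_iff]
end
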